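/- arXiv:math/0609831 — 6 statements merged into one kernel-verified Lean document; each statement's English description precedes it below -/
import Mathlib

section
/- Let R be an integral domain and let f, g ∈ R[X] be nonzero full polynomials (f.coeff 0 ≠ 0 and g.coeff 0 ≠ 0) with natDegree g ≤ natDegree f, and set δ = natDegree f − natDegree g. Suppose Q, R' ∈ R[X] satisfy (C (g.coeff 0))^(δ+1) * (reverse f) = Q * (reverse g) + R', with natDegree Q ≤ δ and degree R' < degree g. Then (C (g.coeff 0))^(δ+1) * f = (reflect δ Q) * g + reflect (natDegree f) R', and moreover X^(δ+1) divides reflect (natDegree f) R'. (In other words, the trail pseudo-remainder of f and g equals, up to a power of X, the reverse of the usual pseudo-remainder of the reversed polynomials.) -/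
open Polynomial

theorem reflect_reflect' {R : Type*} [CommRing R] (N : ℕ) (p : R[X]) :
    reflect N (reflect N p) = p := by
  ext i
  rw [coeff_reflect, coeff_reflect, revAt_invol]

/-- The trail pseudo-remainder of `f` and `g` equals, up to a power of `X`, the reverse of
the usual pseudo-remainder of the reversed polynomials. -/
theorem trail_prem_eq_reverse_prem_reverse {R : Type*} [CommRing R] [IsDomain R]
    (f g : R[X]) (hf : f ≠ 0) (hg : g ≠ 0)
    (hf0 : f.coeff 0 ≠ 0) (hg0 : g.coeff 0 ≠ 0)
    (hdeg : g.natDegree ≤ f.natDegree)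
    (Q R' : R[X])
    (hdiv : (C (g.coeff 0)) ^ (f.natDegree - g.natDegree + 1) * f.reverse
             = Q * g.reverse + R')
    (hQ : Q.natDegree ≤ f.natDegree - g.natDegree)
    (hR : R'.degree < g.degree) :
    (C (g.coeff 0)) ^ (f.natDegree - g.natDegree + 1) * f
      = (reflect (f.natDegree - g.natDegree) Q) * g + reflect f.natDegree R' ∧
    X ^ (f.natDegree - g.natDegree + 1) ∣ reflect f.natDegree R' := by
  have hsum : f.natDegree - g.natDegree + g.natDegree = f.natDegree :=
    Nat.sub_add_cancel hdeg
  constructor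
  · have h := congrArg (reflect f.natDegree) hdiv
    rw [reflect_add, ← C_pow, reflect_C_mul, C_pow] at h
    rw [show f.reverse = reflect f.natDegree f from rfl, reflect_reflect'] at h
    rw [← hsum, reflect_mul Q g.reverse hQ g.reverse_natDegree_le] at h
    rw [show g.reverse = reflect g.natDegree g from rfl, reflect_reflect'] at h
    rw [hsum] at h
    exact h
  · rw [X_pow_dvd_iff]
    intro d hd
    rw [coeff_reflect]
    apply coeff_eq_zero_of_degree_lt
    have hdn : d ≤ f.natDegree := le_trans (Nat.le_of_lt_succ hd) (Nat.sub_le _ _)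
    rw [revAt_le hdn]
    have hg' : g.degree ≤ (f.natDegree - d : ℕ) := by
      rw [degree_eq_natDegree hg]
      exact_mod_cast Nat.le_sub_of_add_le (by omega)
    exact lt_of_lt_of_le hR hg'
end

section
/- Let K be a field and let f, g ∈ K[X] with g ≠ 0 full (g.coeff 0 ≠ 0) and natDegree g ≤ natDegree f; set δ = natDegree f − natDegree g. Then there exists a unique pair (q, r) of polynomials in K[X] such that f = g * q + X^(δ+1) * r, natDegree q ≤ δ, and degree r < degree g. -/
/-!
Since `g(0) ≠ 0`, the polynomial `g` is coprime to `X`, hence to `X ^ (δ + 1)`, and so invertible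
modulo `X ^ (δ + 1)`. The trail quotient `q` is the unique representative of degree at most `δ` of
`f / g` modulo `X ^ (δ + 1)`, and the trail remainder is `(f - g * q) / X ^ (δ + 1)`, whose degree
is small because `f - g * q` has degree at most `deg f = δ + deg g`.
-/

open Polynomial

namespace Polynomial

section CommRing

variable {R : Type*} [CommRing R] {m g : R[X]}

theorem exists_degree_lt_dvd_sub_mul [Nontrivial R] (hm : m.Monic) (hmg : IsCoprime m g)
    (f : R[X]) : ∃ q : R[X], q.degree < m.degree ∧ m ∣ f - g * q := by
  obtain ⟨u, v, huv⟩ := hmg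
  refine ⟨v * f %ₘ m, degree_modByMonic_lt _ hm, u * f + g * (v * f /ₘ m), ?_⟩
  have hvf := modByMonic_add_div (v * f) m
  linear_combination (-f) * huv - g * hvf

theorem eq_of_dvd_sub_mul_of_degree_lt (hm : m.Monic) (hmg : IsCoprime m g) {f q q' : R[X]}
    (hq : q.degree < m.degree) (hq' : q'.degree < m.degree)
    (hfq : m ∣ f - g * q) (hfq' : m ∣ f - g * q') : q = q' := by
  have hdvd : m ∣ q - q' := hmg.dvd_of_dvd_mul_left <| by
    simpa [mul_sub] using dvd_sub hfq' hfq
  by_contra hne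
  exact hm.not_dvd_of_degree_lt (sub_ne_zero.2 hne)
    ((degree_sub_le q q').trans_lt (max_lt hq hq')) hdvd

theorem degree_lt_degree_X_pow_succ_iff [Nontrivial R] {q : R[X]} {n : ℕ} :
    q.degree < (X ^ (n + 1) : R[X]).degree ↔ q.natDegree ≤ n := by
  rw [degree_X_pow, degree_lt_iff_coeff_zero, natDegree_le_iff_coeff_eq_zero]
  rfl

theorem degree_lt_of_eq_mul_add_X_pow_mul [Nontrivial R] {f q r : R[X]} {δ : ℕ} (hg : g ≠ 0)
    (hf : f.natDegree ≤ δ + g.natDegree) (hq : q.natDegree ≤ δ)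
    (hfgqr : f = g * q + X ^ (δ + 1) * r) : r.degree < g.degree := by
  rcases eq_or_ne r 0 with rfl | hr
  · simpa [bot_lt_iff_ne_bot] using hg
  have hXr : (X ^ (δ + 1) * r).natDegree ≤ δ + g.natDegree := by
    rw [eq_sub_of_add_eq' hfgqr.symm]
    exact (natDegree_sub_le _ _).trans (max_le hf (natDegree_mul_le.trans (by omega)))
  rw [natDegree_X_pow_mul _ hr] at hXr
  exact degree_lt_degree (by omega)

end CommRing

theorem isCoprime_X_pow_of_coeff_zero_ne_zero {K : Type*} [Field K] {g : K[X]}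
    (hg0 : g.coeff 0 ≠ 0) (n : ℕ) : IsCoprime (X ^ n) g :=
  (irreducible_X.coprime_iff_not_dvd.2 (X_dvd_iff.not.2 hg0)).pow_left

end Polynomial

/-- Trail division over a field: existence and uniqueness of the trail quotient and
trail remainder. -/
theorem trail_division_field {K : Type*} [Field K] (f g : K[X])
    (hg : g ≠ 0) (hg0 : g.coeff 0 ≠ 0) (hdeg : g.natDegree ≤ f.natDegree) :
    ∃! qr : K[X] × K[X],
      f = g * qr.1 + X ^ (f.natDegree - g.natDegree + 1) * qr.2 ∧
      qr.1.natDegree ≤ f.natDegree - g.natDegree ∧ qr.2.degree < g.degree := by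
  set δ := f.natDegree - g.natDegree
  have hm : (X ^ (δ + 1) : K[X]).Monic := monic_X_pow _
  have hcop := isCoprime_X_pow_of_coeff_zero_ne_zero hg0 (δ + 1)
  have hf : f.natDegree ≤ δ + g.natDegree := by omega
  obtain ⟨q, hq, r, hr⟩ := exists_degree_lt_dvd_sub_mul hm hcop f
  have hfqr : f = g * q + X ^ (δ + 1) * r := by rw [← hr]; ring
  have hq_le : q.natDegree ≤ δ := degree_lt_degree_X_pow_succ_iff.1 hq
  refine ⟨(q, r), ⟨hfqr, hq_le, degree_lt_of_eq_mul_add_X_pow_mul hg hf hq_le hfqr⟩, ?_⟩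
  rintro ⟨q', r'⟩ ⟨hfqr', hq', -⟩
  dsimp only at hfqr' hq'
  have hqq : q' = q := eq_of_dvd_sub_mul_of_degree_lt hm hcop
    (degree_lt_degree_X_pow_succ_iff.2 hq') hq ⟨r', by rw [hfqr']; ring⟩ ⟨r, hr⟩
  subst hqq
  have hrr : r' = r := mul_left_cancel₀ (pow_ne_zero (δ + 1) X_ne_zero)
    (by linear_combination hfqr'.symm.trans hfqr)
  rw [hrr]
end

section
/- Let K be a field and let f, g ∈ K[X] be nonzero full polynomials (f.coeff 0 ≠ 0 and g.coeff 0 ≠ 0). Then reverse (gcd f g) is associated (equal up to a unit) to gcd (reverse f) (reverse g). -/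
open Polynomial

private lemma mirror_eq_reverse {K : Type*} [Field K] {p : K[X]} (hp : p.coeff 0 ≠ 0) :
    p.mirror = p.reverse := by
  rw [Polynomial.mirror, natTrailingDegree_eq_zero.mpr (Or.inr hp), pow_zero, mul_one]

private lemma rev_rev {K : Type*} [Field K] {p : K[X]} (hp : p.coeff 0 ≠ 0) :
    p.reverse.reverse = p := by
  have hp0 : p ≠ 0 := fun h => hp (by simp [h])
  have h1 : p.reverse.coeff 0 ≠ 0 := by
    rw [coeff_zero_reverse]; exact leadingCoeff_ne_zero.mpr hp0
  rw [← mirror_eq_reverse h1, ← mirror_eq_reverse hp, mirror_mirror]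

private lemma rev_dvd {K : Type*} [Field K] {p q : K[X]} (h : p ∣ q) :
    p.reverse ∣ q.reverse := by
  obtain ⟨c, rfl⟩ := h
  rw [reverse_mul_of_domain]
  exact Dvd.intro _ rfl

/-- For nonzero full polynomials over a field, the reverse of the gcd is associated to the
gcd of the reverses. -/
theorem reverse_gcd_associated {K : Type*} [Field K] [DecidableEq K] (f g : K[X])
    (hf : f ≠ 0) (hg : g ≠ 0) (hf0 : f.coeff 0 ≠ 0) (hg0 : g.coeff 0 ≠ 0) :
    Associated ((EuclideanDomain.gcd f g).reverse)
      (EuclideanDomain.gcd f.reverse g.reverse) := by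
  set d := EuclideanDomain.gcd f g with hd
  set e := EuclideanDomain.gcd f.reverse g.reverse with he
  have hrf : f.reverse.coeff 0 ≠ 0 := by
    rw [coeff_zero_reverse]; exact leadingCoeff_ne_zero.mpr hf
  have he0 : e.coeff 0 ≠ 0 := by
    intro h
    exact hrf (X_dvd_iff.mp ((X_dvd_iff.mpr h).trans
      (EuclideanDomain.gcd_dvd_left f.reverse g.reverse)))
  have h1 : d.reverse ∣ e :=
    EuclideanDomain.dvd_gcd (rev_dvd (EuclideanDomain.gcd_dvd_left f g))
      (rev_dvd (EuclideanDomain.gcd_dvd_right f g))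
  have h2 : e.reverse ∣ d := by
    apply EuclideanDomain.dvd_gcd
    · have := rev_dvd (EuclideanDomain.gcd_dvd_left f.reverse g.reverse)
      rwa [rev_rev hf0] at this
    · have := rev_dvd (EuclideanDomain.gcd_dvd_right f.reverse g.reverse)
      rwa [rev_rev hg0] at this
  have h3 : e ∣ d.reverse := by
    have := rev_dvd h2
    rwa [rev_rev he0] at this
  exact associated_of_dvd_dvd h1 h3
end

section
/- Let R be an integral domain and let u, v ∈ R[X] be nonzero polynomials. Then the resultant of X·u and v equals, up to sign, the product of the constant coefficient of v with the resultant of u and v: resultant (X * u) v = (v.coeff 0) * resultant u v, or resultant (X * u) v = −((v.coeff 0) * resultant u v). -/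
open Polynomial

/-- The Sylvester matrix of two polynomials `f` and `g`: a square matrix of size
`natDegree f + natDegree g` whose first `natDegree g` rows are shifted coefficient
vectors of `f` and whose remaining `natDegree f` rows are shifted coefficient
vectors of `g`. -/
noncomputable def sylvesterMatrix {R : Type*} [CommRing R] (f g : R[X]) :
    Matrix (Fin (f.natDegree + g.natDegree)) (Fin (f.natDegree + g.natDegree)) R :=
  Matrix.of fun i j =>
    if (i : ℕ) < g.natDegree then
      (if (i : ℕ) ≤ (j : ℕ) then f.coeff ((j : ℕ) - (i : ℕ)) else 0)
    else
      (if (i : ℕ) - g.natDegree ≤ (j : ℕ) then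
        g.coeff ((j : ℕ) - ((i : ℕ) - g.natDegree)) else 0)

/-- The resultant of two polynomials: the determinant of their Sylvester matrix. -/
noncomputable def sylvResultant {R : Type*} [CommRing R] (f g : R[X]) : R :=
  (sylvesterMatrix f g).det

/-! `sylvesterMatrix f g` is, up to reindexing, the transpose of Mathlib's
`sylvester g f`, so `sylvResultant f g = resultant g f`. Multiplicativity of the resultant then
splits `resultant v (X * u)` into `resultant v X * resultant v u`, and
`resultant v X = (-1) ^ deg v * v(0)`. -/

open Matrix

theorem ite_le_coeff_tsub_eq_ite_le_add_natDegree {R : Type*} [Semiring R] (p : R[X]) (a b : ℕ) :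
    (if a ≤ b then p.coeff (b - a) else 0) =
      if a ≤ b ∧ b ≤ a + p.natDegree then p.coeff (b - a) else 0 := by
  by_cases hb : b ≤ a + p.natDegree
  · simp only [hb, and_true]
  · simp only [hb, and_false, if_false, ite_eq_right_iff]
    intro hab
    exact coeff_eq_zero_of_natDegree_lt (by omega)

theorem sylvesterMatrix_reindex_eq_transpose_sylvester {R : Type*} [CommRing R] (f g : R[X]) :
    (sylvesterMatrix f g).reindex (finCongr (add_comm _ _)) (finCongr (add_comm _ _)) =
      (sylvester g f g.natDegree f.natDegree)ᵀ := by
  ext i j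
  induction i using Fin.addCases <;>
    simp only [sylvesterMatrix, sylvester, reindex_apply, transpose_apply, submatrix_apply,
      of_apply, finCongr_symm, finCongr_apply, Fin.cast_natAdd, Fin.val_cast, Fin.val_castAdd,
      Fin.val_addNat, Fin.val_fin_le, Fin.cast_le_cast, Fin.is_lt, add_lt_iff_neg_right,
      not_lt_zero, add_tsub_cancel_right, ↓reduceIte, Set.mem_Icc,
      Fin.addCases_left, Fin.addCases_right] <;>
    exact ite_le_coeff_tsub_eq_ite_le_add_natDegree _ _ _

theorem sylvResultant_eq_resultant_swap {R : Type*} [CommRing R] (f g : R[X]) :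
    sylvResultant f g = resultant g f := by
  rw [sylvResultant, resultant, ← det_reindex_self (finCongr (add_comm _ _)),
    sylvesterMatrix_reindex_eq_transpose_sylvester, det_transpose]

theorem resultant_X_right {R : Type*} [CommRing R] [Nontrivial R] (f : R[X]) :
    resultant f X = (-1) ^ f.natDegree * f.coeff 0 := by
  have h := resultant_X_pow_right f f.natDegree 1 le_rfl
  rwa [pow_one, pow_one, mul_one, ← natDegree_X (R := R)] at h

theorem sylvResultant_X_mul {R : Type*} [CommRing R] {u : R[X]} (hu : u ≠ 0) (v : R[X]) :
    sylvResultant (X * u) v = (-1) ^ v.natDegree * (v.coeff 0 * sylvResultant u v) := by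
  nontriviality R
  -- `deg (X * u)` is rewritten as `deg X + deg u`, the size `resultant_mul_right` expects.
  rw [sylvResultant_eq_resultant_swap, sylvResultant_eq_resultant_swap, natDegree_X_mul hu,
    add_comm, ← natDegree_X (R := R), resultant_mul_right _ _ _ _ le_rfl, resultant_X_right]
  ring

theorem resultant_X_mul_general {R : Type*} [CommRing R] (u v : R[X])
    (hu : u ≠ 0) :
    sylvResultant (X * u) v = v.coeff 0 * sylvResultant u v ∨
    sylvResultant (X * u) v = -(v.coeff 0 * sylvResultant u v) := by
  rcases neg_one_pow_eq_or R v.natDegree with h | h <;> simp [sylvResultant_X_mul hu, h]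

/-- Up to sign, the resultant of `X * u` and `v` is the constant coefficient of `v`
times the resultant of `u` and `v`. -/
theorem resultant_X_mul {R : Type*} [CommRing R] [IsDomain R] (u v : R[X])
    (hu : u ≠ 0) (hv : v ≠ 0) :
    sylvResultant (X * u) v = v.coeff 0 * sylvResultant u v ∨
    sylvResultant (X * u) v = -(v.coeff 0 * sylvResultant u v) :=
  resultant_X_mul_general u v hu
end

section
/- Let K be a field and let f, g ∈ K[X] be full polynomials (f.coeff 0 ≠ 0 and g.coeff 0 ≠ 0). Suppose q, r ∈ K[X] and e : ℕ satisfy f = g * q + X^e * r. Then gcd f g is associated (equal up to a unit) to gcd g r. (Hence replacing the pair (f, g) by (g, r), where r is the trail remainder of f by g with the superfluous power of X removed, preserves the gcd; this is the correctness of one step of the generalized subresultant gcd algorithm.) -/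
open Polynomial

theorem EuclideanDomain.gcd_associated_of_eq_mul_add_mul {R : Type*} [EuclideanDomain R]
    [DecidableEq R] {f g q c r : R} (h : f = g * q + c * r) (hc : IsCoprime c f) :
    Associated (EuclideanDomain.gcd f g) (EuclideanDomain.gcd g r) := by
  have hdf : gcd f g ∣ f := gcd_dvd_left f g
  have hdg : gcd f g ∣ g := gcd_dvd_right f g
  have hdcr : gcd f g ∣ c * r := by
    rw [eq_sub_of_add_eq' h.symm]
    exact dvd_sub hdf (hdg.mul_right q)
  have hdr : gcd f g ∣ r := (hc.of_isCoprime_of_dvd_right hdf).symm.dvd_of_dvd_mul_left hdcr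
  have hd'f : gcd g r ∣ f :=
    h ▸ dvd_add ((gcd_dvd_left g r).mul_right q) ((gcd_dvd_right g r).mul_left c)
  exact associated_of_dvd_dvd (dvd_gcd hdg hdr) (dvd_gcd hd'f (gcd_dvd_left g r))

theorem Polynomial.isCoprime_X_pow_of_coeff_zero_ne_zero_s9 {K : Type*} [Field K] {f : K[X]}
    (hf : f.coeff 0 ≠ 0) (e : ℕ) : IsCoprime (X ^ e) f :=
  (prime_X.coprime_iff_not_dvd.mpr fun hX => hf (X_dvd_iff.mp hX)).pow_left

theorem gcd_step_associated_general {K : Type*} [Field K] [DecidableEq K]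
    (f g : K[X]) (hf0 : f.coeff 0 ≠ 0)
    (q r : K[X]) (e : ℕ) (h : f = g * q + X ^ e * r) :
    Associated (EuclideanDomain.gcd f g) (EuclideanDomain.gcd g r) :=
  EuclideanDomain.gcd_associated_of_eq_mul_add_mul h
    (isCoprime_X_pow_of_coeff_zero_ne_zero_s9 hf0 e)

/-- Correctness of one step of the generalized subresultant gcd algorithm: if `f`, `g`
are full and `f = g * q + X^e * r`, then `gcd f g` is associated to `gcd g r`. -/
theorem gcd_step_associated {K : Type*} [Field K] [DecidableEq K]
    (f g : K[X]) (hf0 : f.coeff 0 ≠ 0) (hg0 : g.coeff 0 ≠ 0)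
    (q r : K[X]) (e : ℕ) (h : f = g * q + X ^ e * r) :
    Associated (EuclideanDomain.gcd f g) (EuclideanDomain.gcd g r) :=
  gcd_step_associated_general f g hf0 q r e h
end

section
/- Let R be a commutative ring, f, g ∈ R[X], n a positive natural number, and M : Matrix (Fin n) (Fin n) R[X] a square matrix of polynomials such that: (1) every entry of M outside the last column is a constant polynomial, i.e. for all i and all j with (j : ℕ) + 1 < n there exists c : R with M i j = C c; and (2) every entry of the last column is a monomial multiple of f or of g, i.e. for all i there exists m : ℕ with M i (last) = X^m * f or M i (last) = X^m * g. Then det M ∈ Ideal.span {f, g}. -/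
open Polynomial

/-- Every generalized subresultant of `f` and `g` lies in the ideal `(f, g)`: the
determinant of a square matrix whose entries are constants except in the last column,
whose entries are monomial multiples of `f` or of `g`, belongs to `Ideal.span {f, g}`. -/
theorem det_mem_span_of_last_col {R : Type*} [CommRing R] (f g : R[X]) (n : ℕ)
    (M : Matrix (Fin (n + 1)) (Fin (n + 1)) R[X])
    (hconst : ∀ (i j : Fin (n + 1)), (j : ℕ) + 1 < n + 1 → ∃ c : R, M i j = C c)
    (hlast : ∀ i : Fin (n + 1), ∃ m : ℕ,
      M i (Fin.last n) = X ^ m * f ∨ M i (Fin.last n) = X ^ m * g) :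
    M.det ∈ Ideal.span ({f, g} : Set R[X]) := by
  rw [Matrix.det_succ_column M (Fin.last n)]
  refine Ideal.sum_mem _ fun i _ => ?_
  obtain ⟨m, hm | hm⟩ := hlast i <;> rw [hm]
  · exact Ideal.mul_mem_right _ _ (Ideal.mul_mem_left _ _
      (Ideal.mul_mem_left _ _ (Ideal.subset_span (by simp))))
  · exact Ideal.mul_mem_right _ _ (Ideal.mul_mem_left _ _
      (Ideal.mul_mem_left _ _ (Ideal.subset_span (by simp))))
end
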